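/- arXiv:1906.02640 — 3 statements merged into one kernel-verified Lean document; each statement's English description precedes it below -/
import Mathlib

section
/- Let t ≥ 1 and d with 1 ≤ d ≤ t be integers, let δ ∈ (0,1), and set Δ = ⌈ln(1/δ)⌉ + 4 and p = d/t. The truncated estimator Z, which outputs i/(tΔ) if the geometric trial first succeeds at step i ≤ tΔ and outputs 0 otherwise, satisfies 1/(dΔ) − δ ≤ E[Z] = ∑_{i=1}^{tΔ} (i/(tΔ))·(1-p)^{i-1}·p ≤ 1/(dΔ). -/
/-!
Summing the derivative of the geometric series gives the truncated mean in closed form: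
`∑_{i ≤ n} (i/n) q^{i-1} p = 1/(np) - q^n (1/(np) + 1)` with `q = 1 - p`. Hence the estimator is
at most `1/(np) = 1/(dΔ)` and falls short of it by at most `2 q^n` once `np = dΔ ≥ 1`, while
`q^n ≤ exp(-np) ≤ exp(-Δ) ≤ δ e^{-4} ≤ δ/2` by the choice of `Δ`.
-/

open Finset Real

lemma sum_Icc_mul_one_sub_pow_mul {p : ℝ} (hp : p ≠ 0) (n : ℕ) :
    ∑ i ∈ Icc 1 n, (i : ℝ) * (1 - p) ^ (i - 1) * p
      = (1 - (1 - p) ^ n) / p - n * (1 - p) ^ n := by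
  induction n with
  | zero => simp
  | succ n ih =>
    rw [sum_Icc_succ_top (by omega), ih, Nat.add_sub_cancel]
    push_cast
    field_simp
    ring

lemma sum_Icc_div_mul_one_sub_pow_mul {p : ℝ} (hp : p ≠ 0) {n : ℕ} (hn : n ≠ 0) :
    ∑ i ∈ Icc 1 n, ((i : ℝ) / n) * (1 - p) ^ (i - 1) * p
      = 1 / (n * p) - (1 - p) ^ n * (1 / (n * p) + 1) := by
  have hn' : (n : ℝ) ≠ 0 := Nat.cast_ne_zero.mpr hn
  have hterm : ∀ i ∈ Icc 1 n, ((i : ℝ) / n) * (1 - p) ^ (i - 1) * p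
      = (i * (1 - p) ^ (i - 1) * p) / n := fun _ _ => by ring
  rw [sum_congr rfl hterm, ← sum_div, sum_Icc_mul_one_sub_pow_mul hp]
  field_simp
  ring

lemma one_sub_pow_le_exp_neg_mul {p : ℝ} (hp1 : p ≤ 1) (n : ℕ) :
    (1 - p) ^ n ≤ exp (-(n * p)) := by
  rw [neg_mul_eq_mul_neg, exp_nat_mul]
  exact pow_le_pow_left₀ (by linarith) (one_sub_le_exp_neg p) n

lemma exp_neg_natCeil_log_inv_add_le {δ : ℝ} (hδ : 0 < δ) (k : ℝ) :
    exp (-(⌈log (1 / δ)⌉₊ + k)) ≤ δ * exp (-k) := by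
  calc exp (-(⌈log (1 / δ)⌉₊ + k)) ≤ exp (-(log (1 / δ) + k)) := by
        gcongr
        exact Nat.le_ceil _
    _ = δ * exp (-k) := by
        rw [neg_add, exp_add, one_div, log_inv, neg_neg, exp_log hδ]

section TruncatedMean

variable {p : ℝ} (hp0 : 0 < p) (hp1 : p ≤ 1) {n : ℕ} (hn : n ≠ 0)
include hp0 hp1 hn

lemma sum_Icc_div_mul_one_sub_pow_mul_le :
    ∑ i ∈ Icc 1 n, ((i : ℝ) / n) * (1 - p) ^ (i - 1) * p ≤ 1 / (n * p) := by
  rw [sum_Icc_div_mul_one_sub_pow_mul hp0.ne' hn]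
  have : 0 ≤ (1 - p) ^ n := pow_nonneg (by linarith) n
  have : 0 ≤ 1 / (n * p) := by positivity
  nlinarith

lemma sub_le_sum_Icc_div_mul_one_sub_pow_mul (hnp : 1 ≤ n * p) :
    1 / (n * p) - 2 * (1 - p) ^ n
      ≤ ∑ i ∈ Icc 1 n, ((i : ℝ) / n) * (1 - p) ^ (i - 1) * p := by
  rw [sum_Icc_div_mul_one_sub_pow_mul hp0.ne' hn]
  have : 0 ≤ (1 - p) ^ n := pow_nonneg (by linarith) n
  have : 1 / (n * p) ≤ 1 := (div_le_one (by linarith)).mpr hnp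
  nlinarith

end TruncatedMean

theorem stmt2_general (t d : ℕ) (hd : 1 ≤ d) (hdt : d ≤ t)
    (δ : ℝ) (hδ : δ ∈ Set.Ioo (0 : ℝ) 1)
    (Δ : ℕ) (hΔ : Δ = ⌈Real.log (1 / δ)⌉₊ + 4)
    (p : ℝ) (hp : p = (d : ℝ) / t) :
    1 / ((d : ℝ) * Δ) - δ ≤
        ∑ i ∈ Finset.Icc 1 (t * Δ), ((i : ℝ) / ((t : ℝ) * Δ)) * (1 - p) ^ (i - 1) * p ∧
    ∑ i ∈ Finset.Icc 1 (t * Δ), ((i : ℝ) / ((t : ℝ) * Δ)) * (1 - p) ^ (i - 1) * p ≤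
        1 / ((d : ℝ) * Δ) := by
  have hd1 : (1 : ℝ) ≤ d := by exact_mod_cast hd
  have ht0 : (0 : ℝ) < t := by exact_mod_cast hd.trans hdt
  have hΔ1 : (1 : ℝ) ≤ Δ := by exact_mod_cast (by omega : 1 ≤ Δ)
  have hp0 : 0 < p := by rw [hp]; exact div_pos (by linarith) ht0
  have hp1 : p ≤ 1 := by rw [hp, div_le_one ht0]; exact_mod_cast hdt
  have hn : t * Δ ≠ 0 := Nat.mul_ne_zero (by omega) (by omega)
  have hnp : ((t * Δ : ℕ) : ℝ) * p = d * Δ := by rw [hp]; push_cast; field_simp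
  have htail : 2 * (1 - p) ^ (t * Δ) ≤ δ := calc
    2 * (1 - p) ^ (t * Δ) ≤ 2 * exp (-(d * Δ)) := by
        rw [← hnp]; gcongr; exact one_sub_pow_le_exp_neg_mul hp1 _
    _ ≤ 2 * exp (-Δ) := by gcongr; nlinarith
    _ ≤ 2 * (δ * exp (-4)) := by
        gcongr; rw [hΔ]; push_cast; exact exp_neg_natCeil_log_inv_add_le hδ.1 4
    _ ≤ δ := by
        have : exp (-4) ≤ 1 / 2 := by
          rw [exp_neg, one_div]
          exact inv_anti₀ two_pos (by linarith [add_one_le_exp (4 : ℝ)])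
        nlinarith [hδ.1]
  rw [← hnp, show (t : ℝ) * Δ = ((t * Δ : ℕ) : ℝ) by push_cast; rfl]
  exact ⟨by linarith [sub_le_sum_Icc_div_mul_one_sub_pow_mul hp0 hp1 hn (by rw [hnp]; nlinarith)],
    sum_Icc_div_mul_one_sub_pow_mul_le hp0 hp1 hn⟩

/-- Truncated estimator: `Z` outputs `i/(tΔ)` if the geometric trial (success probability
`p = d/t`) first succeeds at step `i ≤ tΔ`, and `0` otherwise, where
`Δ = ⌈ln(1/δ)⌉ + 4`. Then `1/(dΔ) − δ ≤ E[Z] = ∑_{i=1}^{tΔ} (i/(tΔ))·(1-p)^{i-1}·p ≤ 1/(dΔ)`. -/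
theorem stmt2 (t d : ℕ) (ht : 1 ≤ t) (hd : 1 ≤ d) (hdt : d ≤ t)
    (δ : ℝ) (hδ : δ ∈ Set.Ioo (0 : ℝ) 1)
    (Δ : ℕ) (hΔ : Δ = ⌈Real.log (1 / δ)⌉₊ + 4)
    (p : ℝ) (hp : p = (d : ℝ) / t) :
    1 / ((d : ℝ) * Δ) - δ ≤
        ∑ i ∈ Finset.Icc 1 (t * Δ), ((i : ℝ) / ((t : ℝ) * Δ)) * (1 - p) ^ (i - 1) * p ∧
    ∑ i ∈ Finset.Icc 1 (t * Δ), ((i : ℝ) / ((t : ℝ) * Δ)) * (1 - p) ^ (i - 1) * p ≤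
        1 / ((d : ℝ) * Δ) :=
  stmt2_general t d hd hdt δ hδ Δ hΔ p hp
end

section
/- Let t ≥ 1 and d with 1 ≤ d ≤ t be integers, let δ ∈ (0,1), set Δ = ⌈ln(1/δ)⌉ + 4 and p = d/t. Then the truncation error satisfies ∑_{i=tΔ+1}^∞ (i/(tΔ))·(1-p)^{i-1}·p ≤ δ. -/
/-! With `q = 1 - p` and `N = tΔ`, the tail sums in closed form to `q ^ N * (1 + 1 / (N p))`.
Since `N p = dΔ ≥ Δ ≥ ln(1/δ) + 4`, the bound `q ^ N ≤ exp (-(N p))` makes this at most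
`δ e⁻⁴ (1 + 1/4) ≤ δ`. -/

open Real

theorem hasSum_add_mul_geometric {𝕜 : Type*} [NormedDivisionRing 𝕜] [CompleteSpace 𝕜]
    {q : 𝕜} (hq : ‖q‖ < 1) (a : 𝕜) :
    HasSum (fun k : ℕ ↦ (a + k) * q ^ k) (a * (1 - q)⁻¹ + q / (1 - q) ^ 2) := by
  simpa only [add_mul] using ((hasSum_geometric_of_norm_lt_one hq).mul_left a).add
    (hasSum_coe_mul_geometric_of_norm_lt_one hq)

theorem hasSum_geometric_distribution_tail {p : ℝ} (hp0 : 0 < p) (hp1 : p ≤ 1) {N : ℕ}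
    (hN : N ≠ 0) :
    HasSum (fun k : ℕ ↦ ((N : ℝ) + k + 1) / N * (1 - p) ^ (N + k) * p)
      ((1 - p) ^ N * (1 + 1 / (N * p))) := by
  have hq : ‖1 - p‖ < 1 := by rw [Real.norm_eq_abs, abs_lt]; constructor <;> linarith
  have h := (hasSum_add_mul_geometric hq (N + 1)).mul_left ((1 - p) ^ N * p / N)
  have hN' : (N : ℝ) ≠ 0 := by exact_mod_cast hN
  rw [sub_sub_cancel, show (1 - p) ^ N * p / N * ((N + 1) * p⁻¹ + (1 - p) / p ^ 2)
    = (1 - p) ^ N * (1 + 1 / (N * p)) by field_simp; ring] at h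
  exact h.congr_fun fun k ↦ by rw [pow_add]; ring

theorem one_add_inv_mul_exp_neg_le {δ x : ℝ} (hδ0 : 0 < δ) (hδ1 : δ ≤ 1)
    (hx : Real.log (1 / δ) + 4 ≤ x) : (1 + 1 / x) * exp (-x) ≤ δ := by
  have hlog : 0 ≤ Real.log (1 / δ) := Real.log_nonneg (by rw [le_div_iff₀ hδ0]; linarith)
  have hexp : exp (-x) ≤ δ * exp (-4) := by
    calc exp (-x) ≤ exp (Real.log δ + -4) := by
          gcongr; rw [one_div, Real.log_inv] at hx; linarith
      _ = δ * exp (-4) := by rw [exp_add, exp_log hδ0]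
  have hfactor : (1 + 1 / x) * exp (-4) ≤ 1 := by
    rw [exp_neg, ← div_eq_mul_inv, div_le_one (exp_pos 4)]
    have : 1 / x ≤ 1 := by rw [div_le_one (by linarith)]; linarith
    linarith [add_one_le_exp 4]
  calc (1 + 1 / x) * exp (-x) ≤ (1 + 1 / x) * (δ * exp (-4)) := by
        have : 0 < x := by linarith
        gcongr
    _ = δ * ((1 + 1 / x) * exp (-4)) := by ring
    _ ≤ δ := mul_le_of_le_one_right hδ0.le hfactor

theorem stmt7_general (t d : ℕ) (hd : 1 ≤ d) (hdt : d ≤ t)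
    (δ : ℝ) (hδ : δ ∈ Set.Ioo (0 : ℝ) 1)
    (Δ : ℕ) (hΔ : Δ = ⌈Real.log (1 / δ)⌉₊ + 4)
    (p : ℝ) (hp : p = (d : ℝ) / t) :
    ∑' k : ℕ, (((t * Δ : ℕ) : ℝ) + k + 1) / ((t : ℝ) * Δ) * (1 - p) ^ (t * Δ + k) * p ≤ δ := by
  have ht : 0 < t := by omega
  have hp0 : 0 < p := by rw [hp]; positivity
  have hp1 : p ≤ 1 := by rw [hp]; exact div_le_one_of_le₀ (by exact_mod_cast hdt) (by positivity)
  have hN : t * Δ ≠ 0 := by rw [hΔ]; positivity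
  set x : ℝ := ((t * Δ : ℕ) : ℝ) * p with hx
  have hxΔ : Real.log (1 / δ) + 4 ≤ x := by
    have hdΔ : x = d * Δ := by rw [hx, hp]; push_cast; field_simp
    rw [hdΔ, hΔ]; push_cast
    nlinarith [Nat.le_ceil (Real.log (1 / δ)), (Nat.one_le_cast (α := ℝ)).mpr hd]
  have hpow : (1 - p) ^ (t * Δ) ≤ exp (-x) := by
    convert one_sub_div_pow_le_exp_neg (mul_le_of_le_one_right (Nat.cast_nonneg _) hp1) using 2
    field_simp
  rw [← Nat.cast_mul, (hasSum_geometric_distribution_tail hp0 hp1 hN).tsum_eq]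
  calc (1 - p) ^ (t * Δ) * (1 + 1 / x) ≤ exp (-x) * (1 + 1 / x) := by
        gcongr
    _ ≤ δ := by rw [mul_comm]; exact one_add_inv_mul_exp_neg_le hδ.1 hδ.2.le hxΔ

/-- For integers `1 ≤ d ≤ t`, `δ ∈ (0,1)`, `Δ = ⌈ln(1/δ)⌉ + 4` and `p = d/t`, the
truncation error satisfies `∑_{i=tΔ+1}^∞ (i/(tΔ))·(1-p)^{i-1}·p ≤ δ`.
(The tail is reindexed by `i = tΔ + k + 1`.) -/
theorem stmt7 (t d : ℕ) (ht : 1 ≤ t) (hd : 1 ≤ d) (hdt : d ≤ t)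
    (δ : ℝ) (hδ : δ ∈ Set.Ioo (0 : ℝ) 1)
    (Δ : ℕ) (hΔ : Δ = ⌈Real.log (1 / δ)⌉₊ + 4)
    (p : ℝ) (hp : p = (d : ℝ) / t) :
    ∑' k : ℕ, (((t * Δ : ℕ) : ℝ) + k + 1) / ((t : ℝ) * Δ) * (1 - p) ^ (t * Δ + k) * p ≤ δ :=
  stmt7_general t d hd hdt δ hδ Δ hΔ p hp
end

section
/- Let F be a finite family of finite nonempty sets over a ground set U, let m = ∑_{A∈F} |A|, n = |⋃F|, and deg(x) = |{A ∈ F : x ∈ A}|, and let ε ∈ (0,1). Suppose for each x ∈ ⋃F the per-round acceptance probability p_x ∈ (0,1] satisfies 1/((1+ε)·deg(x)) ≤ p_x ≤ (1+ε)/deg(x), so the per-round output probability of x is q_x = (deg(x)/m)·p_x. Then the eventual output distribution μ_x = q_x / ∑_{y∈⋃F} q_y satisfies 1/((1+ε)²·n) ≤ μ_x ≤ (1+ε)²/n for every x ∈ ⋃F. -/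
/-!
Every point of `⋃F` has positive degree, so the acceptance bounds make `deg(x)·p_x` lie in
`[1/(1+ε), 1+ε]`, i.e. `q_x ∈ [1/((1+ε)m), (1+ε)/m]`. Normalising values that all lie in
`[a, b]` over `n` points gives ratios in `[a/(b n), b/(a n)]`, and here `b/a = (1+ε)²`.
-/

open Finset

theorem Finset.card_filter_mem_pos_of_mem_biUnion {U : Type*} [DecidableEq U] {F : Finset (Finset U)} {x : U}
    (hx : x ∈ F.biUnion id) : 0 < #(F.filter (fun A => x ∈ A)) := by
  obtain ⟨A, hA, hxA⟩ := mem_biUnion.1 hx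
  exact card_pos.2 ⟨A, mem_filter.2 ⟨hA, hxA⟩⟩

theorem div_mul_mem_Icc_of_mem_Icc {d m t p : ℝ} (hd : 0 < d) (hm : 0 ≤ m)
    (hp : 1 / (t * d) ≤ p ∧ p ≤ t / d) : 1 / (t * m) ≤ d / m * p ∧ d / m * p ≤ t / m := by
  have hlo : 1 / t ≤ d * p := by
    calc 1 / t = d * (1 / (t * d)) := by field_simp
      _ ≤ d * p := by gcongr; exact hp.1
  have hhi : d * p ≤ t := by
    calc d * p ≤ d * (t / d) := by gcongr; exact hp.2
      _ = t := by field_simp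
  rw [div_mul_eq_mul_div, ← div_div]
  exact ⟨by gcongr, by gcongr⟩

theorem Finset.div_sum_mem_Icc {ι : Type*} {s : Finset ι} {f : ι → ℝ} {a b : ℝ} (ha : 0 < a)
    (hf : ∀ i ∈ s, a ≤ f i ∧ f i ≤ b) {i : ι} (hi : i ∈ s) :
    a / (b * #s) ≤ f i / ∑ j ∈ s, f j ∧ f i / ∑ j ∈ s, f j ≤ b / (a * #s) := by
  have hsum_lo : #s * a ≤ ∑ j ∈ s, f j := by
    simpa using card_nsmul_le_sum s f a fun j hj => (hf j hj).1
  have hsum_hi : ∑ j ∈ s, f j ≤ #s * b := by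
    simpa using sum_le_card_nsmul s f b fun j hj => (hf j hj).2
  have hs : (0 : ℝ) < #s := by exact_mod_cast card_pos.2 ⟨i, hi⟩
  have hsum_pos : 0 < ∑ j ∈ s, f j := lt_of_lt_of_le (by positivity) hsum_lo
  obtain ⟨hlo, hhi⟩ := hf i hi
  constructor
  · rw [mul_comm b]
    exact div_le_div₀ (ha.trans_le hlo).le hlo hsum_pos hsum_hi
  · rw [mul_comm a]
    exact div_le_div₀ (ha.le.trans (hlo.trans hhi)) hhi (by positivity) hsum_lo

theorem stmt10_general {U : Type*} [DecidableEq U] (F : Finset (Finset U))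
    (m n : ℕ) (hmpos : 0 < m)
    (hn : n = (F.biUnion id).card)
    (ε : ℝ) (hε : ε ∈ Set.Ioo (0 : ℝ) 1)
    (p : U → ℝ)
    (hpdeg : ∀ x ∈ F.biUnion id,
      1 / ((1 + ε) * ((F.filter (fun A => x ∈ A)).card : ℝ)) ≤ p x ∧
      p x ≤ (1 + ε) / ((F.filter (fun A => x ∈ A)).card : ℝ))
    (q : U → ℝ)
    (hq : ∀ x, q x = (((F.filter (fun A => x ∈ A)).card : ℝ) / m) * p x)
    (μ : U → ℝ)
    (hμ : ∀ x, μ x = q x / ∑ y ∈ F.biUnion id, q y) :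
    ∀ x ∈ F.biUnion id, 1 / ((1 + ε) ^ 2 * n) ≤ μ x ∧ μ x ≤ (1 + ε) ^ 2 / n := by
  intro x hx
  have hε' : 0 < 1 + ε := by linarith [hε.1]
  have hmR : (0 : ℝ) < m := by exact_mod_cast hmpos
  have hq_mem : ∀ y ∈ F.biUnion id, 1 / ((1 + ε) * m) ≤ q y ∧ q y ≤ (1 + ε) / m :=
    fun y hy => hq y ▸ div_mul_mem_Icc_of_mem_Icc
      (by exact_mod_cast card_filter_mem_pos_of_mem_biUnion hy) hmR.le (hpdeg y hy)
  have hratio := div_sum_mem_Icc (by positivity) hq_mem hx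
  rw [← hn] at hratio
  rw [hμ]
  have hlo : 1 / ((1 + ε) * m) / ((1 + ε) / m * n) = 1 / ((1 + ε) ^ 2 * n) := by
    field_simp
  have hhi : (1 + ε) / m / (1 / ((1 + ε) * m) * n) = (1 + ε) ^ 2 / n := by
    field_simp
  rwa [hlo, hhi] at hratio

/-- `F` is a finite family of finite nonempty sets, `m = ∑_{A∈F} |A| > 0`, `n = |⋃F|`,
`deg(x) = |{A ∈ F : x ∈ A}|`, `ε ∈ (0,1)`. If each per-round acceptance probability
`p_x ∈ (0,1]` satisfies `1/((1+ε)·deg(x)) ≤ p_x ≤ (1+ε)/deg(x)`, and the per-round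
output probability of `x` is `q_x = (deg(x)/m)·p_x`, then the eventual output
distribution `μ_x = q_x / ∑_y q_y` satisfies `1/((1+ε)²·n) ≤ μ_x ≤ (1+ε)²/n`. -/
theorem stmt10 {U : Type*} [DecidableEq U] (F : Finset (Finset U))
    (hne : ∀ A ∈ F, A.Nonempty)
    (m n : ℕ) (hm : m = ∑ A ∈ F, A.card) (hmpos : 0 < m)
    (hn : n = (F.biUnion id).card)
    (ε : ℝ) (hε : ε ∈ Set.Ioo (0 : ℝ) 1)
    (p : U → ℝ)
    (hp01 : ∀ x ∈ F.biUnion id, 0 < p x ∧ p x ≤ 1)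
    (hpdeg : ∀ x ∈ F.biUnion id,
      1 / ((1 + ε) * ((F.filter (fun A => x ∈ A)).card : ℝ)) ≤ p x ∧
      p x ≤ (1 + ε) / ((F.filter (fun A => x ∈ A)).card : ℝ))
    (q : U → ℝ)
    (hq : ∀ x, q x = (((F.filter (fun A => x ∈ A)).card : ℝ) / m) * p x)
    (μ : U → ℝ)
    (hμ : ∀ x, μ x = q x / ∑ y ∈ F.biUnion id, q y) :
    ∀ x ∈ F.biUnion id, 1 / ((1 + ε) ^ 2 * n) ≤ μ x ∧ μ x ≤ (1 + ε) ^ 2 / n :=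
  stmt10_general F m n hmpos hn ε hε p hpdeg q hq μ hμ
end
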